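/- Suppose |K̄^{(ℓ)}(f)|·κ^ℓ ≤ C₁ for all f ∈ [−1/2, 1/2] and κ^ℓ|K̄^{(ℓ)}(f)| ≤ C₂ m^{-3}|f|^{-3} for 80/m ≤ |f| ≤ 1/2 (in wrap-around distance). If T ⊂ [0,1] has wrap-around minimum separation at least Δ_min = 1.26/m, then for every f, ∑_{f_j ∈ T} κ^ℓ |K̄^{(ℓ)}(f − f_j)| ≤ 127 C₁ + 2 C₂ ζ(3), where ζ(3) = ∑_{j=1}^∞ 1/j³. -/

import Mathlib

/-!
Reduce every `f - fⱼ` modulo `1` to its representative in `[-1/2, 1/2]`; by periodicity the sum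
is unchanged and the representatives stay `1.26/m`-separated on the line. At most `127` of them
lie within `80/m` of the origin, where the uniform bound `C₁` is used. On each side of the
origin the `j`-th remaining point is at distance at least `j/m`, so the decay bound makes those
terms at most `C₂/j³`.
-/

open Finset Set Function

theorem Function.Periodic.iteratedDeriv {𝕜 F : Type*} [NontriviallyNormedField 𝕜]
    [NormedAddCommGroup F] [NormedSpace 𝕜 F] {f : 𝕜 → F} {c : 𝕜} (h : Periodic f c) (n : ℕ) :
    Periodic (iteratedDeriv n f) c := fun x => by
  simpa only [h.funext] using (congrFun (iteratedDeriv_comp_add_const n f c) x).symm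

theorem Function.Periodic.exists_sum_sub_eq_sum_of_separated {M : Type*} [AddCommMonoid M]
    {G : ℝ → M} (hG : Periodic G 1) {T : Finset ℝ} {Δ : ℝ} (hΔ : 0 < Δ)
    (hsep : ∀ x ∈ T, ∀ x' ∈ T, x ≠ x' → ∀ t : ℤ, Δ ≤ |x - x' + t|) (f : ℝ) :
    ∃ U : Finset ℝ, (∀ y ∈ U, |y| ≤ 1 / 2) ∧ (U : Set ℝ).Pairwise (fun y y' => Δ ≤ |y - y'|) ∧
      ∑ x ∈ T, G (f - x) = ∑ y ∈ U, G y := by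
  set r : ℝ → ℝ := fun x => f - x - round (f - x)
  have hgap : ∀ x ∈ T, ∀ x' ∈ T, x ≠ x' → Δ ≤ |r x - r x'| := by
    intro x hx x' hx' hne
    convert hsep x' hx' x hx hne.symm (round (f - x') - round (f - x)) using 2
    simp only [r]
    push_cast
    ring
  have hinj : InjOn r T := fun x hx x' hx' h => by
    by_contra hne
    have := hgap x hx x' hx' hne
    rw [h, sub_self, abs_zero] at this
    linarith
  refine ⟨T.image r, ?_, ?_, ?_⟩
  · intro y hy
    obtain ⟨x, -, rfl⟩ := mem_image.1 hy
    exact abs_sub_round _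
  · rw [coe_image, hinj.pairwise_image]
    exact hgap
  · rw [sum_image hinj]
    refine sum_congr rfl fun x _ => ?_
    simpa using (hG.sub_int_mul_eq (round (f - x))).symm

section Separated

variable {V : Finset ℝ} {a b Δ : ℝ}

theorem add_mul_le_orderEmbOfFin (ha : ∀ y ∈ V, a ≤ y)
    (hsep : (V : Set ℝ).Pairwise fun y y' => Δ ≤ |y - y'|) (i : Fin V.card) :
    a + i * Δ ≤ V.orderEmbOfFin rfl i := by
  obtain ⟨i, hi⟩ := i
  induction i with
  | zero => simpa using ha _ (V.orderEmbOfFin_mem rfl _)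
  | succ n ih =>
    have hlt : V.orderEmbOfFin rfl ⟨n, by omega⟩ < V.orderEmbOfFin rfl ⟨n + 1, hi⟩ :=
      (V.orderEmbOfFin rfl).strictMono (Fin.mk_lt_mk.2 n.lt_succ_self)
    have hgap : Δ ≤ |_ - _| := hsep (V.orderEmbOfFin_mem rfl _) (V.orderEmbOfFin_mem rfl _) hlt.ne'
    rw [abs_of_pos (sub_pos.2 hlt)] at hgap
    push_cast
    linarith [ih (by omega)]

theorem card_le_of_pairwise_of_subset_Ioo {n : ℕ} (hV : ∀ y ∈ V, y ∈ Ioo a b)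
    (hsep : (V : Set ℝ).Pairwise fun y y' => Δ ≤ |y - y'|) (hn : b - a ≤ n * Δ) :
    V.card ≤ n := by
  by_contra! hlt
  have hlow := add_mul_le_orderEmbOfFin (fun y hy => (hV y hy).1.le) hsep ⟨n, hlt⟩
  have hup := (hV _ (V.orderEmbOfFin_mem rfl ⟨n, hlt⟩)).2
  simp only at hlow
  linarith

theorem sum_le_tsum_of_pairwise {φ : ℝ → ℝ} (hφ : AntitoneOn φ (Ici a)) (hΔ : 0 ≤ Δ)
    (ha : ∀ y ∈ V, a ≤ y) (hsep : (V : Set ℝ).Pairwise fun y y' => Δ ≤ |y - y'|)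
    (hnn : ∀ i : ℕ, 0 ≤ φ (a + i * Δ)) (hsum : Summable fun i : ℕ => φ (a + i * Δ)) :
    ∑ y ∈ V, φ y ≤ ∑' i : ℕ, φ (a + i * Δ) :=
  calc ∑ y ∈ V, φ y = ∑ i : Fin V.card, φ (V.orderEmbOfFin rfl i) := by
        conv_lhs => rw [← V.map_orderEmbOfFin_univ rfl, sum_map]
        rfl
    _ ≤ ∑ i : Fin V.card, φ (a + i * Δ) := sum_le_sum fun i _ =>
        hφ (mem_Ici.2 (le_add_of_nonneg_right (by positivity))) (ha _ (V.orderEmbOfFin_mem rfl i))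
          (add_mul_le_orderEmbOfFin ha hsep i)
    _ = ∑ i ∈ range V.card, φ (a + i * Δ) := Fin.sum_univ_eq_sum_range (fun i => φ (a + i * Δ)) _
    _ ≤ ∑' i : ℕ, φ (a + i * Δ) := hsum.sum_le_tsum _ fun i _ => hnn i

theorem sum_abs_le_two_mul_tsum_of_pairwise {φ : ℝ → ℝ} (hφ : AntitoneOn φ (Ici a))
    (hΔ : 0 ≤ Δ) (ha : ∀ y ∈ V, a ≤ |y|) (hsep : (V : Set ℝ).Pairwise fun y y' => Δ ≤ |y - y'|)
    (hnn : ∀ i : ℕ, 0 ≤ φ (a + i * Δ)) (hsum : Summable fun i : ℕ => φ (a + i * Δ)) :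
    ∑ y ∈ V, φ |y| ≤ 2 * ∑' i : ℕ, φ (a + i * Δ) := by
  have hpos : ∑ y ∈ V with 0 ≤ y, φ |y| ≤ ∑' i : ℕ, φ (a + i * Δ) := by
    rw [sum_congr rfl fun y hy => by rw [abs_of_nonneg (mem_filter.1 hy).2]]
    refine sum_le_tsum_of_pairwise hφ hΔ (fun y hy => ?_)
      (hsep.mono (coe_subset.2 (filter_subset _ _))) hnn hsum
    simpa [abs_of_nonneg (mem_filter.1 hy).2] using ha y (mem_filter.1 hy).1
  have hneg : ∑ y ∈ V with ¬ 0 ≤ y, φ |y| ≤ ∑' i : ℕ, φ (a + i * Δ) := by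
    have hreflect : ∑ y ∈ V with ¬ 0 ≤ y, φ |y| =
        ∑ y ∈ (V.filter (¬ 0 ≤ ·)).map (Equiv.neg ℝ).toEmbedding, φ y := by
      rw [sum_map]
      exact sum_congr rfl fun y hy => by simp [abs_of_neg (not_le.1 (mem_filter.1 hy).2)]
    rw [hreflect]
    refine sum_le_tsum_of_pairwise hφ hΔ (fun y hy => ?_) ?_ hnn hsum
    · obtain ⟨x, hx, rfl⟩ := mem_map.1 hy
      simpa [abs_of_neg (not_le.1 (mem_filter.1 hx).2)] using ha x (mem_filter.1 hx).1
    · rw [coe_map]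
      refine Set.Pairwise.image fun x hx x' hx' hne => ?_
      change Δ ≤ |-x - -x'|
      rw [neg_sub_neg, abs_sub_comm]
      exact hsep (mem_filter.1 hx).1 (mem_filter.1 hx').1 hne
  rw [← sum_filter_add_sum_filter_not V (0 ≤ ·)]
  linarith

theorem sum_div_cube_abs_le_two_mul_tsum {V : Finset ℝ} {m C : ℝ} (hm : 0 < m) (hC : 0 ≤ C)
    (hV : ∀ y ∈ V, 1 / m ≤ |y|) (hsep : (V : Set ℝ).Pairwise fun y y' => 1 / m ≤ |y - y'|) :
    ∑ y ∈ V, C / (m ^ 3 * |y| ^ 3) ≤ 2 * C * ∑' j : ℕ, 1 / ((j : ℝ) + 1) ^ 3 := by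
  have hφ : AntitoneOn (fun t : ℝ => C / (m ^ 3 * t ^ 3)) (Ici (1 / m)) := by
    intro s hs t _ hst
    have : 0 < s := (one_div_pos.2 hm).trans_le hs
    dsimp only
    gcongr
  have hterm : ∀ i : ℕ, C / (m ^ 3 * (1 / m + i * (1 / m)) ^ 3) = C * (1 / ((i : ℝ) + 1) ^ 3) :=
    fun i => by field_simp; ring
  have hzeta : Summable fun j : ℕ => 1 / ((j : ℝ) + 1) ^ 3 := by
    simpa using (summable_nat_add_iff 1).2 (Real.summable_one_div_nat_pow.2 (by norm_num : 1 < 3))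
  calc ∑ y ∈ V, C / (m ^ 3 * |y| ^ 3)
      ≤ 2 * ∑' i : ℕ, C / (m ^ 3 * (1 / m + i * (1 / m)) ^ 3) :=
        sum_abs_le_two_mul_tsum_of_pairwise (φ := fun t => C / (m ^ 3 * t ^ 3)) hφ (by positivity)
          hV hsep (fun i => by rw [hterm]; positivity)
          (by simpa only [hterm] using hzeta.mul_left C)
    _ = 2 * C * ∑' j : ℕ, 1 / ((j : ℝ) + 1) ^ 3 := by
        simp only [hterm, tsum_mul_left, mul_assoc]

end Separated

theorem sum_le_of_pairwise_of_le_div_cube {U : Finset ℝ} {g : ℝ → ℝ} {m C₁ C₂ : ℝ} (hm : 0 < m)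
    (hC₁ : 0 ≤ C₁) (hC₂ : 0 ≤ C₂) (hbound : ∀ y ∈ U, g y ≤ C₁)
    (hdecay : ∀ y ∈ U, 80 / m ≤ |y| → g y ≤ C₂ / (m ^ 3 * |y| ^ 3))
    (hsep : (U : Set ℝ).Pairwise fun y y' => 1.26 / m ≤ |y - y'|) :
    ∑ y ∈ U, g y ≤ 127 * C₁ + 2 * C₂ * ∑' j : ℕ, 1 / ((j : ℝ) + 1) ^ 3 := by
  rw [← sum_filter_add_sum_filter_not U fun y => |y| < 80 / m]
  -- `127` gaps of `1.26/m` already exceed the window length `160/m`.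
  have hnear_card : #{y ∈ U | |y| < 80 / m} ≤ 127 :=
    card_le_of_pairwise_of_subset_Ioo (fun y hy => abs_lt.1 (mem_filter.1 hy).2)
      (hsep.mono (coe_subset.2 (filter_subset _ _))) (by field_simp; norm_num)
  have hnear : ∑ y ∈ U with |y| < 80 / m, g y ≤ 127 * C₁ := by
    refine (sum_le_card_nsmul _ _ _ fun y hy => hbound y (mem_filter.1 hy).1).trans ?_
    rw [nsmul_eq_mul]
    gcongr
    exact_mod_cast hnear_card
  have hfar : ∑ y ∈ U with ¬ |y| < 80 / m, g y ≤ 2 * C₂ * ∑' j : ℕ, 1 / ((j : ℝ) + 1) ^ 3 := by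
    have hunit : ∀ {c : ℝ}, 1 ≤ c → 1 / m ≤ c / m := fun hc => by gcongr
    refine (sum_le_sum fun y hy => hdecay y (mem_filter.1 hy).1 (not_lt.1 (mem_filter.1 hy).2)
      ).trans (sum_div_cube_abs_le_two_mul_tsum hm hC₂ ?_ ?_)
    · exact fun y hy => (hunit (by norm_num)).trans (not_lt.1 (mem_filter.1 hy).2)
    · exact (hsep.mono (coe_subset.2 (filter_subset _ _))).imp fun y y' h =>
        (hunit (by norm_num)).trans h
  linarith

theorem kernel_tail_sum_bound_general (m : ℕ) (hm : 1000 ≤ m) (ℓ : ℕ)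
    (K : ℝ → ℂ) (hper : Function.Periodic K 1)
    (κ : ℝ) (hκpos : 0 < κ) (C₁ C₂ : ℝ)
    (hbound : ∀ x : ℝ, κ ^ ℓ * ‖iteratedDeriv ℓ K x‖ ≤ C₁)
    (hdecay : ∀ x : ℝ, 80 / m ≤ |x| → |x| ≤ 1 / 2 →
      κ ^ ℓ * ‖iteratedDeriv ℓ K x‖ ≤ C₂ / ((m : ℝ) ^ 3 * |x| ^ 3))
    (T : Finset ℝ)
    (hsep : ∀ x ∈ T, ∀ x' ∈ T, x ≠ x' → ∀ t : ℤ, 1.26 / m ≤ |x - x' + t|) :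
    ∀ f : ℝ, ∑ fj ∈ T, κ ^ ℓ * ‖iteratedDeriv ℓ K (f - fj)‖ ≤
      127 * C₁ + 2 * C₂ * ∑' j : ℕ, 1 / ((j : ℝ) + 1) ^ 3 := by
  intro f
  have hm₀ : (0 : ℝ) < m := Nat.cast_pos.2 (by omega)
  have hG_nonneg : ∀ x, 0 ≤ κ ^ ℓ * ‖iteratedDeriv ℓ K x‖ := fun x => by positivity
  have hC₂ : 0 ≤ C₂ := by
    have h80 : |(80 : ℝ) / m| = 80 / m := abs_of_pos (by positivity)
    have hhalf : |(80 : ℝ) / m| ≤ 1 / 2 := by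
      rw [h80, div_le_iff₀ hm₀]
      linarith [show (1000 : ℝ) ≤ m by exact_mod_cast hm]
    have hden : (0 : ℝ) < (m : ℝ) ^ 3 * |(80 : ℝ) / m| ^ 3 := by positivity
    simpa using (le_div_iff₀ hden).1 ((hG_nonneg _).trans (hdecay _ h80.ge hhalf))
  obtain ⟨U, hU_half, hU_sep, hU_sum⟩ := Periodic.exists_sum_sub_eq_sum_of_separated
    (G := fun x => κ ^ ℓ * ‖iteratedDeriv ℓ K x‖)
    (fun x => by dsimp only; rw [hper.iteratedDeriv ℓ x]) (by positivity) hsep f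
  rw [hU_sum]
  exact sum_le_of_pairwise_of_le_div_cube hm₀ ((hG_nonneg 0).trans (hbound 0)) hC₂
    (fun y _ => hbound y) (fun y hy hy80 => hdecay y hy80 (hU_half y hy)) hU_sep

/-- If `κ^ℓ|K̄^{(ℓ)}(f)| ≤ C₁` everywhere and `κ^ℓ|K̄^{(ℓ)}(f)| ≤ C₂ m⁻³|f|⁻³` for
`80/m ≤ |f| ≤ 1/2`, and `T ⊂ [0,1]` has wrap-around minimum separation `≥ 1.26/m`, then
for every `f`, `∑_{f_j ∈ T} κ^ℓ|K̄^{(ℓ)}(f − f_j)| ≤ 127 C₁ + 2 C₂ ζ(3)`. -/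
theorem kernel_tail_sum_bound (m : ℕ) (hm : 1000 ≤ m) (ℓ : ℕ)
    (K : ℝ → ℂ) (hper : Function.Periodic K 1)
    (κ : ℝ) (hκpos : 0 < κ) (C₁ C₂ : ℝ)
    (hbound : ∀ x : ℝ, κ ^ ℓ * ‖iteratedDeriv ℓ K x‖ ≤ C₁)
    (hdecay : ∀ x : ℝ, 80 / m ≤ |x| → |x| ≤ 1 / 2 →
      κ ^ ℓ * ‖iteratedDeriv ℓ K x‖ ≤ C₂ / ((m : ℝ) ^ 3 * |x| ^ 3))
    (T : Finset ℝ) (hT : ∀ x ∈ T, x ∈ Set.Icc (0 : ℝ) 1)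
    (hsep : ∀ x ∈ T, ∀ x' ∈ T, x ≠ x' → ∀ t : ℤ, 1.26 / m ≤ |x - x' + t|) :
    ∀ f : ℝ, ∑ fj ∈ T, κ ^ ℓ * ‖iteratedDeriv ℓ K (f - fj)‖ ≤
      127 * C₁ + 2 * C₂ * ∑' j : ℕ, 1 / ((j : ℝ) + 1) ^ 3 :=
  kernel_tail_sum_bound_general m hm ℓ K hper κ hκpos C₁ C₂ hbound hdecay T hsep
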